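/- Let A be an irreducible local Möbius covariant net, Q = (H_a, μ, ι) a C*-Frobenius algebra in Rep(A), Ĩ an arg-valued interval, X ∈ B_Q(Ĩ), and ξ ∈ H_a(I). Then X = μ L(ξ,Ĩ)|_{H_a} if and only if ξ = X ι Ω. Consequently the C*-Frobenius algebra Q is uniquely determined by the extension B_Q; that is, the map Q ↦ B_Q is injective. -/

import Mathlib

noncomputable section

open scoped Topology

/-! ## Arg-valued intervals in the unit circle.

An arg-valued interval `Ĩ = (I, arg_I)` (a nonempty, non-dense open interval of the unit
circle together with a continuous branch of argument) is modelled by an open interval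
`(a, b) ⊆ ℝ` of length `< 2π`, projecting onto the open arc
`{e^{iθ} : a < θ < b}` of the circle. -/

structure ArgInterval : Type where
  a : ℝ
  b : ℝ
  lt : a < b
  len : b < a + 2 * Real.pi

namespace ArgInterval

/-- The underlying (non arg-valued) interval: the open arc in the unit circle. -/
def proj (I : ArgInterval) : Set Circle := Circle.exp '' Set.Ioo I.a I.b

/-- The clockwise complement `Ĩ'` of an arg-valued interval. -/
def compl (I : ArgInterval) : ArgInterval where
  a := I.b - 2 * Real.pi
  b := I.a
  lt := by have h1 := I.len; linarith
  len := by have h1 := I.lt; linarith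

/-- Inclusion `Ĩ ⊆ J̃` of arg-valued intervals (inclusion of intervals with matching
arg functions). -/
instance : LE ArgInterval := ⟨fun I J => J.a ≤ I.a ∧ I.b ≤ J.b⟩

/-- The action of the full anticlockwise rotation `ϱ(2π)` on arg-valued intervals:
it fixes the underlying interval and shifts the arg function by `2π`. -/
def rot2pi (I : ArgInterval) : ArgInterval where
  a := I.a + 2 * Real.pi
  b := I.b + 2 * Real.pi
  lt := by have h1 := I.lt; linarith
  len := by have h1 := I.len; linarith

end ArgInterval

/-! ## Operator-theoretic preliminaries. -/

section OperatorPrelims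

variable {H K : Type} [NormedAddCommGroup H] [InnerProductSpace ℂ H] [CompleteSpace H]
  [NormedAddCommGroup K] [InnerProductSpace ℂ K] [CompleteSpace K]

/-- Convergence of a sequence of bounded operators in the weak operator topology. -/
def WOTTendsto (T : ℕ → H →L[ℂ] K) (S : H →L[ℂ] K) : Prop :=
  ∀ (ξ : H) (η : K),
    Filter.Tendsto (fun n => (inner ℂ (T n ξ) η : ℂ)) Filter.atTop (nhds (inner ℂ (S ξ) η))

/-- Normality (σ-weak continuity) of a map defined on a set of bounded operators on a
separable Hilbert space: bounded sequences converging in the weak operator topology are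
mapped to convergent sequences.  (On bounded balls of `B(H)` with `H` separable, the
σ-weak topology coincides with the weak operator topology and is metrizable, so this
sequential formulation is equivalent to the usual one.) -/
def WOTNormalOn (M : Set (H →L[ℂ] H)) (Φ : (H →L[ℂ] H) → (K →L[ℂ] K)) : Prop :=
  ∀ (x : ℕ → H →L[ℂ] H) (x' : H →L[ℂ] H) (C : ℝ), (∀ n, x n ∈ M) → x' ∈ M →
    (∀ n, ‖x n‖ ≤ C) → WOTTendsto x x' → WOTTendsto (fun n => Φ (x n)) (Φ x')

/-- A normal (σ-weakly continuous) unital *-representation of a von Neumann algebra,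
given as a set `M` of operators, on the Hilbert space `K`.  The map `Φ` is defined on all
of `B(H)` but only its restriction to `M` is relevant. -/
structure RepOn (M : Set (H →L[ℂ] H)) (Φ : (H →L[ℂ] H) → (K →L[ℂ] K)) : Prop where
  map_add : ∀ x ∈ M, ∀ y ∈ M, Φ (x + y) = Φ x + Φ y
  map_smul : ∀ (c : ℂ), ∀ x ∈ M, Φ (c • x) = c • Φ x
  map_mul : ∀ x ∈ M, ∀ y ∈ M, Φ (x * y) = Φ x * Φ y
  map_star : ∀ x ∈ M, Φ (star x) = star (Φ x)
  map_one : Φ 1 = 1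
  normal : WOTNormalOn M Φ

/-- A unitary operator between Hilbert spaces: an isometric surjection. -/
def IsUnitaryOp (T : H →L[ℂ] K) : Prop := (∀ ξ, ‖T ξ‖ = ‖ξ‖) ∧ Function.Surjective T

end OperatorPrelims

/-! ## The Möbius group `PSU(1,1)`.

We realize it via the group `SU(1,1)` of matrices `[[α, β], [conj β, conj α]]` with
`|α|² - |β|² = 1`, acting on the unit circle by `z ↦ (αz + β)/(conj β · z + conj α)`.
A unitary representation of `PSU(1,1)` is a unitary representation of `SU(1,1)` which is
trivial on the center `{±1}`. -/

structure SU11 : Type where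
  α : ℂ
  β : ℂ
  rel : Complex.normSq α - Complex.normSq β = 1

namespace SU11

instance : One SU11 := ⟨⟨1, 0, by simp⟩⟩

instance : Mul SU11 :=
  ⟨fun g h =>
    { α := g.α * h.α + g.β * (starRingEnd ℂ) h.β
      β := g.α * h.β + g.β * (starRingEnd ℂ) h.α
      rel := by
        have hg := g.rel
        have hh := h.rel
        have e1 : g.α * h.α * (starRingEnd ℂ) (g.β * (starRingEnd ℂ) h.β)
            = g.α * h.β * (starRingEnd ℂ) (g.β * (starRingEnd ℂ) h.α) := by
          simp only [map_mul, Complex.conj_conj]; ring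
        rw [Complex.normSq_add, Complex.normSq_add, Complex.normSq_mul, Complex.normSq_mul,
          Complex.normSq_mul, Complex.normSq_mul, Complex.normSq_conj, Complex.normSq_conj, e1]
        linear_combination (Complex.normSq h.α - Complex.normSq h.β) * hg + hh }⟩

instance : Inv SU11 :=
  ⟨fun g => ⟨(starRingEnd ℂ) g.α, -g.β, by
    simpa only [Complex.normSq_conj, Complex.normSq_neg] using g.rel⟩⟩

/-- The negative of the identity; `PSU(1,1) = SU(1,1)/{1, neg_one}`. -/
def negOne : SU11 := ⟨-1, 0, by simp⟩

/-- The rotation `z ↦ e^{it} z` as an element of `SU(1,1)`. -/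
def rot (t : ℝ) : SU11 :=
  ⟨Complex.exp ((t / 2 : ℝ) * Complex.I), 0, by
    have h := Complex.norm_exp_ofReal_mul_I (t / 2)
    rw [← Complex.sq_norm, ← Complex.sq_norm, h]
    simp⟩

instance : TopologicalSpace SU11 :=
  TopologicalSpace.induced (fun g => (g.α, g.β)) inferInstance

/-- The Möbius transformation of `ℂ` associated with an element of `SU(1,1)`. -/
def act (g : SU11) (z : ℂ) : ℂ :=
  (g.α * z + g.β) / ((starRingEnd ℂ) g.β * z + (starRingEnd ℂ) g.α)

lemma absβ_lt_absα (g : SU11) : ‖g.β‖ < ‖g.α‖ := by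
  have h := g.rel
  have h1 := Complex.sq_norm g.α
  have h2 := Complex.sq_norm g.β
  nlinarith [norm_nonneg g.α, norm_nonneg g.β]

lemma denom_ne_zero (g : SU11) {z : ℂ} (hz : ‖z‖ = 1) :
    (starRingEnd ℂ) g.β * z + (starRingEnd ℂ) g.α ≠ 0 := by
  intro h0
  have h1 : (starRingEnd ℂ) g.α = -((starRingEnd ℂ) g.β * z) := by linear_combination h0
  have h2 : ‖g.α‖ = ‖g.β‖ := by
    have := congrArg norm h1
    simpa [hz] using this
  have := g.absβ_lt_absα
  rw [h2] at this
  exact lt_irrefl _ this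

lemma abs_act_eq_one (g : SU11) {z : ℂ} (hz : ‖z‖ = 1) :
    ‖g.act z‖ = 1 := by
  have hz1 : z * (starRingEnd ℂ) z = 1 := by
    rw [Complex.mul_conj]; norm_cast
    rw [← Complex.sq_norm, hz]; norm_num
  have key : g.α * z + g.β = ((starRingEnd ℂ) ((starRingEnd ℂ) g.β * z + (starRingEnd ℂ) g.α)) * z := by
    simp only [map_add, map_mul, Complex.conj_conj]
    linear_combination (-g.β) * hz1
  have habs : ‖g.α * z + g.β‖
      = ‖(starRingEnd ℂ) g.β * z + (starRingEnd ℂ) g.α‖ := by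
    rw [key, norm_mul, Complex.norm_conj, hz, mul_one]
  have hd := g.denom_ne_zero hz
  rw [act, norm_div, habs, div_self]
  exact norm_ne_zero_iff.mpr hd

/-- The action of `SU(1,1)` on the unit circle. -/
def actC (g : SU11) (z : Circle) : Circle :=
  ⟨g.act z, mem_sphere_zero_iff_norm.2 (by
    exact g.abs_act_eq_one (Circle.norm_coe z))⟩

end SU11

/-! ## Möbius covariant nets. -/

/-- A local Möbius covariant net on the Hilbert space `H`: an assignment of von Neumann
algebras to the (arg-valued) intervals of the circle, depending only on the underlying
interval, satisfying isotony, locality, Möbius covariance with positive energy, and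
having a cyclic invariant unit vacuum vector. -/
structure MobiusNetOn (H : Type) [NormedAddCommGroup H] [InnerProductSpace ℂ H]
    [CompleteSpace H] : Type 1 where
  alg : ArgInterval → VonNeumannAlgebra H
  alg_proj : ∀ {I J : ArgInterval}, I.proj = J.proj → alg I = alg J
  isotony : ∀ {I J : ArgInterval}, I ≤ J →
    (alg I : Set (H →L[ℂ] H)) ⊆ (alg J : Set (H →L[ℂ] H))
  locality : ∀ {I J : ArgInterval}, Disjoint I.proj J.proj →
    ∀ x ∈ alg I, ∀ y ∈ alg J, x * y = y * x
  U : SU11 → (H →L[ℂ] H)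
  U_mul : ∀ g h : SU11, U (g * h) = (U g).comp (U h)
  U_one : U 1 = 1
  U_inv : ∀ g : SU11, U g⁻¹ = star (U g)
  U_unitary : ∀ g : SU11, IsUnitaryOp (U g)
  U_center : U SU11.negOne = 1
  U_continuous : ∀ ξ : H, Continuous fun g : SU11 => U g ξ
  covariance : ∀ (g : SU11) (I J : ArgInterval), J.proj = SU11.actC g '' I.proj →
    (fun x => U g * x * star (U g)) '' (alg I : Set (H →L[ℂ] H)) = (alg J : Set (H →L[ℂ] H))
  Ω : H
  Ω_norm : ‖Ω‖ = 1
  Ω_invariant : ∀ g : SU11, U g Ω = Ω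
  Ω_cyclic : Dense {ξ : H | ∃ x ∈ Set.centralizer (Set.centralizer
    (⋃ I : ArgInterval, (alg I : Set (H →L[ℂ] H)))), ξ = x Ω}
  positivity : ∀ ξ : H, ∃ F : ℂ → H, ContinuousOn F {z : ℂ | 0 ≤ z.im} ∧
    DifferentiableOn ℂ F {z : ℂ | 0 < z.im} ∧ (∀ z : ℂ, 0 ≤ z.im → ‖F z‖ ≤ ‖ξ‖) ∧
    ∀ t : ℝ, F (t : ℂ) = U (SU11.rot t) ξ

namespace MobiusNetOn

variable {H₀ : Type} [NormedAddCommGroup H₀] [InnerProductSpace ℂ H₀] [CompleteSpace H₀]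

/-- Irreducibility of a Möbius covariant net: the scalar multiples of the vacuum are the
only Möbius-invariant vectors. -/
def IsIrreducible (A : MobiusNetOn H₀) : Prop :=
  ∀ ξ : H₀, (∀ g : SU11, A.U g ξ = ξ) → ∃ c : ℂ, ξ = c • A.Ω

end MobiusNetOn

/-! ## Representations (modules) of a Möbius covariant net. -/

/-- A (normal) module `H_i` of the net `A`: a Hilbert space with compatible normal
representations `π_{i,I}` of the algebras `A(I)`, depending only on the underlying
interval.  (The maps `π I` are defined on all of `B(H₀)`; only their restrictions to
`A(I)` are relevant.) -/
structure AModule {H₀ : Type} [NormedAddCommGroup H₀] [InnerProductSpace ℂ H₀]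
    [CompleteSpace H₀] (A : MobiusNetOn H₀) : Type 1 where
  car : Type
  [nacg : NormedAddCommGroup car]
  [ips : InnerProductSpace ℂ car]
  [cs : CompleteSpace car]
  [sep : TopologicalSpace.SeparableSpace car]
  π : ArgInterval → (H₀ →L[ℂ] H₀) → (car →L[ℂ] car)
  π_rep : ∀ I : ArgInterval, RepOn (A.alg I : Set (H₀ →L[ℂ] H₀)) (π I)
  π_compat : ∀ {I J : ArgInterval}, I ≤ J → ∀ x ∈ A.alg I, π J x = π I x
  π_proj : ∀ {I J : ArgInterval}, I.proj = J.proj → ∀ x ∈ A.alg I, π I x = π J x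

attribute [instance] AModule.nacg AModule.ips AModule.cs AModule.sep

variable {H₀ : Type} [NormedAddCommGroup H₀] [InnerProductSpace ℂ H₀] [CompleteSpace H₀]
  {A : MobiusNetOn H₀}

/-- The subspace `H_i(I) = Hom_{A(I')}(H_0, H_i) Ω` of an `A`-module, where `I'` is the
complement of `I`. -/
def AModule.interval (M : AModule A) (I : ArgInterval) : Set M.car :=
  {ξ : M.car | ∃ T : H₀ →L[ℂ] M.car,
    (∀ x ∈ A.alg I.compl, T.comp x = (M.π I.compl x).comp T) ∧ T A.Ω = ξ}

/-- The vacuum module `H_0` of the net `A`. -/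
def MobiusNetOn.vacMod (A : MobiusNetOn H₀) [TopologicalSpace.SeparableSpace H₀] :
    AModule A where
  car := H₀
  π := fun _ x => x
  π_rep := fun _ =>
    { map_add := fun _ _ _ _ => rfl
      map_smul := fun _ _ _ => rfl
      map_mul := fun _ _ _ _ => rfl
      map_star := fun _ _ => rfl
      map_one := rfl
      normal := fun _ _ _ _ _ _ h => h }
  π_compat := fun _ _ _ => rfl
  π_proj := fun _ _ _ => rfl

/-- A morphism (intertwiner) of `A`-modules. -/
structure AHom (M N : AModule A) : Type where
  T : M.car →L[ℂ] N.car
  intertwine : ∀ (I : ArgInterval), ∀ x ∈ A.alg I, T.comp (M.π I x) = (N.π I x).comp T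

namespace AHom

/-- The identity morphism. -/
def id (M : AModule A) : AHom M M :=
  ⟨ContinuousLinearMap.id ℂ M.car, fun _ _ _ => by
    ext v; simp⟩

/-- Composition of morphisms of `A`-modules. -/
def comp {M N P : AModule A} (F : AHom N P) (G : AHom M N) : AHom M P where
  T := F.T.comp G.T
  intertwine := by
    intro I x hx
    ext v
    have hG := congrFun (congrArg DFunLike.coe (G.intertwine I x hx)) v
    have hF := congrFun (congrArg DFunLike.coe (F.intertwine I x hx)) (G.T v)
    simp only [ContinuousLinearMap.comp_apply] at hG hF ⊢
    rw [hG, hF]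

/-- The adjoint of a morphism of `A`-modules is again a morphism. -/
def adj {M N : AModule A} (F : AHom M N) : AHom N M where
  T := ContinuousLinearMap.adjoint F.T
  intertwine := by
    intro I x hx
    have hsx : star x ∈ A.alg I := star_mem hx
    have h := F.intertwine I (star x) hsx
    have h2 := congrArg (fun S : M.car →L[ℂ] N.car => ContinuousLinearMap.adjoint S) h
    simp only [ContinuousLinearMap.adjoint_comp] at h2
    have hM : ContinuousLinearMap.adjoint (M.π I (star x)) = M.π I x := by
      rw [(M.π_rep I).map_star x hx, ← ContinuousLinearMap.star_eq_adjoint, star_star]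
    have hN : ContinuousLinearMap.adjoint (N.π I (star x)) = N.π I x := by
      rw [(N.π_rep I).map_star x hx, ← ContinuousLinearMap.star_eq_adjoint, star_star]
    rw [hM, hN] at h2
    exact h2.symm

end AHom

/-! ## The categorical extension of an irreducible Möbius covariant net.

The braided `C*`-tensor structure on `Rep(A)` given by Connes fusion is characterized by
the existence (and uniqueness) of a categorical extension: the `*`-bifunctor `⊠` together
with the charged field operators `L(ξ, Ĩ)` and `R(ξ, Ĩ)`, satisfying isotony,
functoriality, state-field correspondence, density of fusion products, locality and
braiding. -/

structure CatExt {H₀ : Type} [NormedAddCommGroup H₀] [InnerProductSpace ℂ H₀]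
    [CompleteSpace H₀] [TopologicalSpace.SeparableSpace H₀] (A : MobiusNetOn H₀) :
    Type 2 where
  /-- Connes fusion `H_i ⊠ H_j` of two `A`-modules. -/
  fuse : AModule A → AModule A → AModule A
  /-- Fusion `F ⊠ G` of morphisms. -/
  fuseMap : ∀ {M M' N N' : AModule A}, AHom M M' → AHom N N' → AHom (fuse M N) (fuse M' N')
  fuseMap_id : ∀ M N : AModule A,
    (fuseMap (AHom.id M) (AHom.id N)).T = ContinuousLinearMap.id ℂ (fuse M N).car
  fuseMap_comp : ∀ {M M' M'' N N' N'' : AModule A} (F' : AHom M' M'') (F : AHom M M')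
    (G' : AHom N' N'') (G : AHom N N'),
    (fuseMap (F'.comp F) (G'.comp G)).T = (fuseMap F' G').T.comp (fuseMap F G).T
  fuseMap_adj : ∀ {M M' N N' : AModule A} (F : AHom M M') (G : AHom N N'),
    (fuseMap F.adj G.adj).T = ContinuousLinearMap.adjoint (fuseMap F G).T
  /-- The (unitary) associator, suppressed in the informal notation. -/
  assoc : ∀ M N P : AModule A, AHom (fuse (fuse M N) P) (fuse M (fuse N P))
  assoc_unitary : ∀ M N P : AModule A, IsUnitaryOp (assoc M N P).T
  /-- The (unitary) left unitor `H_0 ⊠ H_i ≅ H_i`. -/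
  unitorL : ∀ M : AModule A, AHom (fuse A.vacMod M) M
  unitorL_unitary : ∀ M : AModule A, IsUnitaryOp (unitorL M).T
  /-- The (unitary) right unitor `H_i ⊠ H_0 ≅ H_i`. -/
  unitorR : ∀ M : AModule A, AHom (fuse M A.vacMod) M
  unitorR_unitary : ∀ M : AModule A, IsUnitaryOp (unitorR M).T
  /-- The (unitary) braiding `ß_{i,j} : H_i ⊠ H_j → H_j ⊠ H_i`. -/
  braid : ∀ M N : AModule A, AHom (fuse M N) (fuse N M)
  braid_unitary : ∀ M N : AModule A, IsUnitaryOp (braid M N).T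
  /-- The left charged field operator `L(ξ, Ĩ) : H_k → H_i ⊠ H_k` for `ξ ∈ H_i(I)`. -/
  L : ∀ (M : AModule A) (I : ArgInterval) (ξ : M.car), ξ ∈ M.interval I →
    ∀ N : AModule A, N.car →L[ℂ] (fuse M N).car
  /-- The right charged field operator `R(ξ, Ĩ) : H_k → H_k ⊠ H_i` for `ξ ∈ H_i(I)`. -/
  R : ∀ (M : AModule A) (I : ArgInterval) (ξ : M.car), ξ ∈ M.interval I →
    ∀ N : AModule A, N.car →L[ℂ] (fuse N M).car
  /-- `L(ξ, Ĩ)` intertwines the actions of `A(I')`. -/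
  L_intertwine : ∀ (M : AModule A) (I : ArgInterval) (ξ : M.car) (h : ξ ∈ M.interval I)
    (N : AModule A), ∀ x ∈ A.alg I.compl,
    (L M I ξ h N).comp (N.π I.compl x) = ((fuse M N).π I.compl x).comp (L M I ξ h N)
  /-- `R(ξ, Ĩ)` intertwines the actions of `A(I')`. -/
  R_intertwine : ∀ (M : AModule A) (I : ArgInterval) (ξ : M.car) (h : ξ ∈ M.interval I)
    (N : AModule A), ∀ x ∈ A.alg I.compl,
    (R M I ξ h N).comp (N.π I.compl x) = ((fuse N M).π I.compl x).comp (R M I ξ h N)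
  /-- Isotony. -/
  L_isotony : ∀ (M : AModule A) (I J : ArgInterval) (ξ : M.car) (hI : ξ ∈ M.interval I)
    (hJ : ξ ∈ M.interval J), I ≤ J → ∀ N : AModule A, L M J ξ hJ N = L M I ξ hI N
  R_isotony : ∀ (M : AModule A) (I J : ArgInterval) (ξ : M.car) (hI : ξ ∈ M.interval I)
    (hJ : ξ ∈ M.interval J), I ≤ J → ∀ N : AModule A, R M J ξ hJ N = R M I ξ hI N
  /-- Functoriality. -/
  L_natural : ∀ (M : AModule A) {N N' : AModule A} (G : AHom N N') (I : ArgInterval)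
    (ξ : M.car) (h : ξ ∈ M.interval I),
    (fuseMap (AHom.id M) G).T.comp (L M I ξ h N) = (L M I ξ h N').comp G.T
  R_natural : ∀ (M : AModule A) {N N' : AModule A} (G : AHom N N') (I : ArgInterval)
    (ξ : M.car) (h : ξ ∈ M.interval I),
    (fuseMap G (AHom.id M)).T.comp (R M I ξ h N) = (R M I ξ h N').comp G.T
  /-- State-field correspondence (under the identifications given by the unitors). -/
  statefield_L : ∀ (M : AModule A) (I : ArgInterval) (ξ : M.car) (h : ξ ∈ M.interval I),
    (unitorR M).T (L M I ξ h A.vacMod A.Ω) = ξ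
  statefield_R : ∀ (M : AModule A) (I : ArgInterval) (ξ : M.car) (h : ξ ∈ M.interval I),
    (unitorL M).T (R M I ξ h A.vacMod A.Ω) = ξ
  /-- When acting on `H_0`, `L(ξ, Ĩ)` equals `R(ξ, Ĩ)` (under the unitors). -/
  LR_vac : ∀ (M : AModule A) (I : ArgInterval) (ξ : M.car) (h : ξ ∈ M.interval I),
    (unitorR M).T.comp (L M I ξ h A.vacMod) = (unitorL M).T.comp (R M I ξ h A.vacMod)
  /-- Density of fusion products. -/
  density_L : ∀ (M : AModule A) (I : ArgInterval) (N : AModule A),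
    Dense (↑(Submodule.span ℂ {ζ : (fuse M N).car |
      ∃ (ξ : M.car) (h : ξ ∈ M.interval I) (η : N.car), ζ = L M I ξ h N η}) :
      Set (fuse M N).car)
  density_R : ∀ (M : AModule A) (I : ArgInterval) (N : AModule A),
    Dense (↑(Submodule.span ℂ {ζ : (fuse N M).car |
      ∃ (ξ : M.car) (h : ξ ∈ M.interval I) (η : N.car), ζ = R M I ξ h N η}) :
      Set (fuse N M).car)
  /-- Locality: for `J̃` clockwise to `Ĩ` (i.e. `J̃ ⊆ Ĩ'`), `ξ ∈ H_i(I)`, `η ∈ H_j(J)`,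
  the square formed by `L(ξ, Ĩ)` and `R(η, J̃)` commutes adjointly. -/
  locality : ∀ (M N P : AModule A) (I J : ArgInterval), J ≤ I.compl →
    ∀ (ξ : M.car) (η : N.car) (hξ : ξ ∈ M.interval I) (hη : η ∈ N.interval J),
    ((assoc M P N).T.comp ((R N J η hη (fuse M P)).comp (L M I ξ hξ P))
      = (L M I ξ hξ (fuse P N)).comp (R N J η hη P))
    ∧ ((R N J η hη P).comp (ContinuousLinearMap.adjoint (L M I ξ hξ P))
      = (ContinuousLinearMap.adjoint (L M I ξ hξ (fuse P N))).comp
          ((assoc M P N).T.comp (R N J η hη (fuse M P))))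
  /-- Braiding: `ß_{i,j} L(ξ, Ĩ) = R(ξ, Ĩ)`. -/
  braiding : ∀ (M N : AModule A) (I : ArgInterval) (ξ : M.car) (h : ξ ∈ M.interval I),
    (braid M N).T.comp (L M I ξ h N) = R M I ξ h N

/-! ## `C*`-Frobenius algebras in `Rep(A)` and the associated extensions. -/

section Frobenius

variable {H₀ : Type} [NormedAddCommGroup H₀] [InnerProductSpace ℂ H₀] [CompleteSpace H₀]
  [TopologicalSpace.SeparableSpace H₀] {A : MobiusNetOn H₀}

/-- A `C*`-Frobenius algebra `Q = (H_a, μ, ι)` in `Rep(A)` on the `A`-module `Ma`: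
`μ ∈ Hom_A(H_a ⊠ H_a, H_a)`, `ι ∈ Hom_A(H_0, H_a)`, satisfying the unit law
`μ(ι ⊠ id) = id = μ(id ⊠ ι)` and the adjoint commutativity of the associativity square
(associativity plus the Frobenius relation).  Associators and unitors, suppressed in the
informal notation, are inserted explicitly. -/
structure FrobAlgOn (E : CatExt A) (Ma : AModule A) : Type where
  μ : AHom (E.fuse Ma Ma) Ma
  ι : AHom A.vacMod Ma
  unit_l : μ.T.comp ((E.fuseMap ι (AHom.id Ma)).T.comp
      (ContinuousLinearMap.adjoint (E.unitorL Ma).T)) = ContinuousLinearMap.id ℂ Ma.car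
  unit_r : μ.T.comp ((E.fuseMap (AHom.id Ma) ι).T.comp
      (ContinuousLinearMap.adjoint (E.unitorR Ma).T)) = ContinuousLinearMap.id ℂ Ma.car
  frob_comm : μ.T.comp (E.fuseMap μ (AHom.id Ma)).T
      = μ.T.comp ((E.fuseMap (AHom.id Ma) μ).T.comp (E.assoc Ma Ma Ma).T)
  frob_adj : (E.fuseMap (AHom.id Ma) μ).T.comp ((E.assoc Ma Ma Ma).T.comp
        (ContinuousLinearMap.adjoint (E.fuseMap μ (AHom.id Ma)).T))
      = (ContinuousLinearMap.adjoint μ.T).comp μ.T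

variable {E : CatExt A} {Ma : AModule A}

/-- The von Neumann algebras of the extension `B_Q` associated with a `C*`-Frobenius
algebra `Q`, as sets: `B_Q(Ĩ) = { μ L(ξ, Ĩ)|_{H_a} : ξ ∈ H_a(I) }`. -/
def FrobAlgOn.BQ (Q : FrobAlgOn E Ma) (I : ArgInterval) : Set (Ma.car →L[ℂ] Ma.car) :=
  {X : Ma.car →L[ℂ] Ma.car |
    ∃ (ξ : Ma.car) (h : ξ ∈ Ma.interval I), X = Q.μ.T.comp (E.L Ma I ξ h Ma)}

/-- A (unitary) left `Q`-module `(H_i, μ_i)`: `μ_i ∈ Hom_A(H_a ⊠ H_i, H_i)` with the unit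
law `μ_i(ι ⊠ id_i) = id_i` and the adjoint commutativity of the associativity square
`μ_i(id_a ⊠ μ_i) = μ_i(μ ⊠ id_i)`. -/
structure LeftModOn (Q : FrobAlgOn E Ma) (Mi : AModule A) : Type where
  μi : AHom (E.fuse Ma Mi) Mi
  unit : μi.T.comp ((E.fuseMap Q.ι (AHom.id Mi)).T.comp
      (ContinuousLinearMap.adjoint (E.unitorL Mi).T)) = ContinuousLinearMap.id ℂ Mi.car
  frob_comm : μi.T.comp (E.fuseMap Q.μ (AHom.id Mi)).T
      = μi.T.comp ((E.fuseMap (AHom.id Ma) μi).T.comp (E.assoc Ma Ma Mi).T)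
  frob_adj : (E.fuseMap (AHom.id Ma) μi).T.comp ((E.assoc Ma Ma Mi).T.comp
        (ContinuousLinearMap.adjoint (E.fuseMap Q.μ (AHom.id Mi)).T))
      = (ContinuousLinearMap.adjoint μi.T).comp μi.T

/-- A (generally non-local) extension `(H_a, B, ι)` of the net `A` on the `A`-module `Ma`
with `ι ∈ Hom_A(H_0, H_a)`: von Neumann algebras `B(Ĩ)` on `H_a`, indexed by arg-valued
intervals, satisfying the extension property, isotony, the Reeh-Schlieder property and
relative locality. -/
structure ExtensionOn (Ma : AModule A) (ι : AHom A.vacMod Ma) : Type 1 where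
  B : ArgInterval → VonNeumannAlgebra Ma.car
  ext_prop : ∀ (I : ArgInterval), ∀ x ∈ A.alg I, Ma.π I x ∈ B I
  isotony : ∀ {I J : ArgInterval}, I ≤ J →
    (B I : Set (Ma.car →L[ℂ] Ma.car)) ⊆ (B J : Set (Ma.car →L[ℂ] Ma.car))
  cyclic : ∀ I : ArgInterval, Dense {ζ : Ma.car | ∃ X ∈ B I, ζ = X (ι.T A.Ω)}
  separating : ∀ I : ArgInterval, ∀ X ∈ B I, X (ι.T A.Ω) = 0 → X = 0
  rel_local : ∀ I : ArgInterval, ∀ X ∈ B I, ∀ x ∈ A.alg I.compl,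
    X * (Ma.π I.compl x) = (Ma.π I.compl x) * X

/-- A `(B_Q, A)`-module structure on an `A`-module `Mi`: compatible normal
representations `π_{i,Ĩ}` of the algebras `B_Q(Ĩ)` on `H_i`, restricting to the given
`A`-module structure via `π_{i,Ĩ} ∘ π_{a,I} = π_{i,I}` on `A(I)`. -/
structure BQModOn (Q : FrobAlgOn E Ma) (Mi : AModule A) : Type where
  πB : ArgInterval → (Ma.car →L[ℂ] Ma.car) → (Mi.car →L[ℂ] Mi.car)
  rep : ∀ I : ArgInterval, RepOn (Q.BQ I) (πB I)
  extend : ∀ I : ArgInterval, ∀ x ∈ A.alg I, πB I (Ma.π I x) = Mi.π I x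
  compat : ∀ {I J : ArgInterval}, I ≤ J → ∀ X ∈ Q.BQ I, πB J X = πB I X

/-- The compatibility `π_{i,Ĩ}(μ L(ξ,Ĩ)|_{H_a}) = μ_i L(ξ,Ĩ)|_{H_i}` between a
`(B_Q, A)`-module structure and a left `Q`-module structure on an `A`-module. -/
def BQModOn.Realizes {Q : FrobAlgOn E Ma} {Mi : AModule A} (P : BQModOn Q Mi)
    (lm : LeftModOn Q Mi) : Prop :=
  ∀ (I : ArgInterval) (ξ : Ma.car) (h : ξ ∈ Ma.interval I),
    P.πB I (Q.μ.T.comp (E.L Ma I ξ h Ma)) = lm.μi.T.comp (E.L Ma I ξ h Mi)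

end Frobenius

/-! ## Statement 5.

For `X ∈ B_Q(Ĩ)` and `ξ ∈ H_a(I)`, one has `X = μ L(ξ,Ĩ)|_{H_a}` iff `ξ = X ι Ω`.
Consequently a `C*`-Frobenius algebra `Q` is uniquely determined by the extension
`(H_a, B_Q, ι)`: the map `Q ↦ B_Q` is injective. -/

section AuxProof

lemma adjoint_comp_self_of_unitary {K L : Type} [NormedAddCommGroup K]
    [InnerProductSpace ℂ K] [CompleteSpace K] [NormedAddCommGroup L]
    [InnerProductSpace ℂ L] [CompleteSpace L]
    (T : K →L[ℂ] L) (hT : IsUnitaryOp T) (w : K) :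
    ContinuousLinearMap.adjoint T (T w) = w := by
  apply ext_inner_right ℂ
  intro y
  rw [ContinuousLinearMap.adjoint_inner_left]
  exact LinearIsometry.inner_map_map ⟨T.toLinearMap, hT.1⟩ w y

variable {H₀ : Type} [NormedAddCommGroup H₀] [InnerProductSpace ℂ H₀] [CompleteSpace H₀]
  [TopologicalSpace.SeparableSpace H₀] {A : MobiusNetOn H₀} {E : CatExt A} {Ma : AModule A}

lemma AHom.ext' {M N : AModule A} {F G : AHom M N} (h : F.T = G.T) : F = G := by
  cases F; cases G; cases h; rfl

lemma FrobAlgOn.ext' {Q Q' : FrobAlgOn E Ma} (hμ : Q.μ = Q'.μ) (hι : Q.ι = Q'.ι) :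
    Q = Q' := by
  cases Q; cases Q'; cases hμ; cases hι; rfl

/-- The key computation: `μ L(ξ, Ĩ) ι Ω = ξ`. -/
lemma frob_key (Q : FrobAlgOn E Ma) (I : ArgInterval) (ξ : Ma.car)
    (h : ξ ∈ Ma.interval I) :
    Q.μ.T ((E.L Ma I ξ h Ma) (Q.ι.T A.Ω)) = ξ := by
  have hnat := E.L_natural Ma Q.ι I ξ h
  change Q.μ.T (((E.L Ma I ξ h Ma).comp Q.ι.T) A.Ω) = ξ
  rw [← hnat]
  change Q.μ.T ((E.fuseMap (AHom.id Ma) Q.ι).T (E.L Ma I ξ h A.vacMod A.Ω)) = ξ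
  set ζ := E.L Ma I ξ h A.vacMod A.Ω with hζ
  have hζ2 : ζ = ContinuousLinearMap.adjoint (E.unitorR Ma).T ((E.unitorR Ma).T ζ) :=
    (adjoint_comp_self_of_unitary _ (E.unitorR_unitary Ma) ζ).symm
  have hUR : (E.unitorR Ma).T ζ = ξ := E.statefield_L Ma I ξ h
  have hur := congrFun (congrArg DFunLike.coe Q.unit_r) ((E.unitorR Ma).T ζ)
  simp only [ContinuousLinearMap.comp_apply, ContinuousLinearMap.id_apply] at hur
  calc Q.μ.T ((E.fuseMap (AHom.id Ma) Q.ι).T ζ)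
      = Q.μ.T ((E.fuseMap (AHom.id Ma) Q.ι).T
          (ContinuousLinearMap.adjoint (E.unitorR Ma).T ((E.unitorR Ma).T ζ))) := by
        rw [← hζ2]
    _ = (E.unitorR Ma).T ζ := hur
    _ = ξ := hUR

lemma frob_part1 (Q : FrobAlgOn E Ma) (I : ArgInterval) (X : Ma.car →L[ℂ] Ma.car)
    (hX : X ∈ Q.BQ I) (ξ : Ma.car) (h : ξ ∈ Ma.interval I) :
    X = Q.μ.T.comp (E.L Ma I ξ h Ma) ↔ ξ = X (Q.ι.T A.Ω) := by
  constructor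
  · intro hXeq
    rw [hXeq]
    exact (frob_key Q I ξ h).symm
  · intro hξ
    obtain ⟨ξ₀, h₀, hX0⟩ := hX
    have hkey := frob_key Q I ξ₀ h₀
    have heq : ξ = ξ₀ := by rw [hξ, hX0]; exact hkey
    subst heq
    exact hX0

end AuxProof

theorem statement_5 {H₀ : Type} [NormedAddCommGroup H₀] [InnerProductSpace ℂ H₀]
    [CompleteSpace H₀] [TopologicalSpace.SeparableSpace H₀]
    (A : MobiusNetOn H₀) (hA : A.IsIrreducible) (E : CatExt A)
    (Ma : AModule A) (Q : FrobAlgOn E Ma) :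
    (∀ (I : ArgInterval) (X : Ma.car →L[ℂ] Ma.car), X ∈ Q.BQ I →
      ∀ (ξ : Ma.car) (h : ξ ∈ Ma.interval I),
        (X = Q.μ.T.comp (E.L Ma I ξ h Ma) ↔ ξ = X (Q.ι.T A.Ω)))
    ∧ (∀ Q' : FrobAlgOn E Ma, Q'.ι = Q.ι → (∀ I : ArgInterval, Q'.BQ I = Q.BQ I) →
        Q' = Q) := by
  refine ⟨fun I X hX ξ h => frob_part1 Q I X hX ξ h, ?_⟩
  intro Q' hι hBQ
  have hπpos : (0 : ℝ) < Real.pi := Real.pi_pos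
  set I₀ : ArgInterval := ⟨0, Real.pi, hπpos, by linarith⟩ with hI₀
  have hμ : Q'.μ = Q.μ := by
    apply AHom.ext'
    apply ContinuousLinearMap.ext_on (E.density_L Ma I₀ Ma)
    rintro ζ ⟨ξ, h, η, rfl⟩
    have hmem : Q'.μ.T.comp (E.L Ma I₀ ξ h Ma) ∈ Q.BQ I₀ := by
      rw [← hBQ]; exact ⟨ξ, h, rfl⟩
    have hXι : ξ = (Q'.μ.T.comp (E.L Ma I₀ ξ h Ma)) (Q.ι.T A.Ω) := by
      rw [← hι]; exact (frob_key Q' I₀ ξ h).symm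
    have hcomp : Q'.μ.T.comp (E.L Ma I₀ ξ h Ma) = Q.μ.T.comp (E.L Ma I₀ ξ h Ma) :=
      (frob_part1 Q I₀ _ hmem ξ h).mpr hXι
    exact congrFun (congrArg DFunLike.coe hcomp) η
  exact FrobAlgOn.ext' hμ hι
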